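/- Let k ≥ 1, x ∈ ℝ^k, V ∈ ℝ^k, G ∈ ℝ, Δt > 0, and L ≥ 0. Let u : ℝ^k → ℝ be differentiable with ‖∇u(y)‖ ≤ L for all y ∈ ℝ^k. Define the DFLM target operator value (T u)(x) = ∫_{ℝ^k} u(x−z)·f_{−V·Δt, Δt}(z) dz − G·Δt. Then the pointwise learning amount in one bootstrapping iteration satisfies |(T u)(x) − u(x)| ≤ L·(C₁·√Δt + C₂·‖V‖·Δt) + |G|·Δt, with constants C₁ = k·√(2/π) and C₂ = k. -/

import Mathlib

/-!
Since `u` is `L`-Lipschitz, `|(T u)(x) - u(x) + GΔt| ≤ L ∫ ‖z‖ f(z) dz` for the Gaussian density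
`f = f_{μ,Δt}`, `μ = -VΔt`, and `∫ ‖z‖ f ≤ ∫ ‖z - μ‖ f + ‖μ‖`. The density factors into
one-dimensional Gaussians, so bounding the Euclidean norm by the `ℓ¹` norm reduces
`∫ ‖z - μ‖ f` to `k` copies of the mean absolute deviation `√(2Δt/π)` of `N(0, Δt)`.
-/

open MeasureTheory Real

/-- Density of the multivariate normal distribution `N(μ, v·I)` on `ℝ^k`
(with variance parameter `v = σ²`). -/
noncomputable def gaussDensity (k : ℕ) (μ : EuclideanSpace ℝ (Fin k)) (v : ℝ)
    (z : EuclideanSpace ℝ (Fin k)) : ℝ :=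
  (2 * Real.pi * v) ^ (-(k : ℝ) / 2) * Real.exp (-‖z - μ‖ ^ 2 / (2 * v))

open Set ProbabilityTheory
open scoped NNReal

theorem integral_Ioi_mul_exp_neg_mul_sq {b : ℝ} (hb : 0 < b) :
    ∫ t in Ioi (0 : ℝ), t * exp (-b * t ^ 2) = (2 * b)⁻¹ := by
  have h := integral_mul_cexp_neg_mul_sq (b := (b : ℂ)) (by simpa using hb)
  simp_rw [← Complex.ofReal_pow, ← Complex.ofReal_neg, ← Complex.ofReal_mul,
    ← Complex.ofReal_exp, ← Complex.ofReal_mul, integral_complex_ofReal] at h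
  exact_mod_cast h

theorem integral_abs_mul_exp_neg_mul_sq {b : ℝ} (hb : 0 < b) :
    ∫ t, |t| * exp (-b * t ^ 2) = b⁻¹ := by
  have h := integral_comp_abs (f := fun t => t * exp (-b * t ^ 2))
  simp only [sq_abs] at h
  rw [h, integral_Ioi_mul_exp_neg_mul_sq hb]
  field_simp

theorem EuclideanSpace.norm_le_sum_abs {ι : Type*} [Fintype ι] (x : EuclideanSpace ℝ ι) :
    ‖x‖ ≤ ∑ i, |x i| := by
  rw [EuclideanSpace.norm_eq]
  refine Real.sqrt_le_iff.2 ⟨Finset.sum_nonneg fun i _ => abs_nonneg _, ?_⟩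
  simpa using Finset.sum_sq_le_sq_sum_of_nonneg (s := Finset.univ) (f := fun i => |x i|)
    fun i _ => abs_nonneg _

namespace EuclideanSpace

variable {ι : Type*} [Fintype ι]

theorem integral_prod_apply (f : ι → ℝ → ℝ) :
    ∫ z : EuclideanSpace ℝ ι, ∏ i, f i (z i) = ∏ i, ∫ t, f i t :=
  ((volume_preserving_symm_measurableEquiv_toLp ι).integral_comp'
    (g := fun y : ι → ℝ => ∏ i, f i (y i))).trans (integral_fintype_prod_volume_eq_prod f)

theorem integrable_prod_apply {f : ι → ℝ → ℝ} (hf : ∀ i, Integrable (f i)) :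
    Integrable fun z : EuclideanSpace ℝ ι => ∏ i, f i (z i) :=
  ((volume_preserving_symm_measurableEquiv_toLp ι).integrable_comp_emb
    (MeasurableEquiv.measurableEmbedding _)).2 (Integrable.fintype_prod hf)

end EuclideanSpace

theorem LipschitzWith.abs_integral_comp_sub_mul_sub_le {E : Type*} [NormedAddCommGroup E]
    [MeasurableSpace E] [OpensMeasurableSpace E] {ν : Measure E} {u : E → ℝ} {K : ℝ≥0}
    (hu : LipschitzWith K u) {f : E → ℝ} (hf0 : 0 ≤ f) (hf : Integrable f ν)
    (hf1 : ∫ z, f z ∂ν = 1) (m : E) (hfm : Integrable (fun z => ‖z - m‖ * f z) ν) (x : E) :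
    |∫ z, u (x - z) * f z ∂ν - u x| ≤ K * (∫ z, ‖z - m‖ * f z ∂ν + ‖m‖) := by
  have hdom : ∀ z, |(u (x - z) - u x) * f z| ≤ K * (‖z - m‖ * f z) + K * ‖m‖ * f z := by
    intro z
    have hlip : |u (x - z) - u x| ≤ K * (‖z - m‖ + ‖m‖) := calc
      |u (x - z) - u x| ≤ K * ‖z‖ := by simpa [dist_eq_norm] using hu.dist_le_mul (x - z) x
      _ ≤ K * (‖z - m‖ + ‖m‖) := by gcongr; exact norm_le_norm_sub_add z m
    rw [abs_mul, abs_of_nonneg (hf0 z)]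
    linarith [mul_le_mul_of_nonneg_right hlip (hf0 z)]
  have hg : Integrable (fun z => K * (‖z - m‖ * f z) + K * ‖m‖ * f z) ν :=
    (hfm.const_mul _).add (hf.const_mul _)
  have hdiff : Integrable (fun z => (u (x - z) - u x) * f z) ν :=
    hg.mono' (((hu.continuous.comp (continuous_const.sub continuous_id)).sub
      continuous_const).aestronglyMeasurable.mul hf.aestronglyMeasurable) (ae_of_all _ hdom)
  have hsplit : ∫ z, u (x - z) * f z ∂ν = ∫ z, (u (x - z) - u x) * f z ∂ν + u x := calc
    ∫ z, u (x - z) * f z ∂ν = ∫ z, (u (x - z) - u x) * f z + u x * f z ∂ν := by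
      simp_rw [sub_mul, sub_add_cancel]
    _ = ∫ z, (u (x - z) - u x) * f z ∂ν + u x := by
      rw [integral_add hdiff (hf.const_mul _), integral_const_mul, hf1, mul_one]
  calc |∫ z, u (x - z) * f z ∂ν - u x|
      = |∫ z, (u (x - z) - u x) * f z ∂ν| := by rw [hsplit, add_sub_cancel_right]
    _ ≤ ∫ z, |(u (x - z) - u x) * f z| ∂ν := abs_integral_le_integral_abs
    _ ≤ ∫ z, K * (‖z - m‖ * f z) + K * ‖m‖ * f z ∂ν := integral_mono hdiff.abs hg hdom
    _ = K * (∫ z, ‖z - m‖ * f z ∂ν + ‖m‖) := by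
      rw [integral_add (hfm.const_mul _) (hf.const_mul _), integral_const_mul, integral_const_mul,
        hf1]
      ring

namespace ProbabilityTheory

theorem gaussianPDFReal_eq_const_mul_exp (μ : ℝ) (v : ℝ≥0) (t : ℝ) :
    gaussianPDFReal μ v t = (√(2 * π * v))⁻¹ * exp (-(2 * v : ℝ)⁻¹ * (t - μ) ^ 2) := by
  rw [gaussianPDFReal]
  congr 2
  ring

theorem integrable_abs_sub_mul_gaussianPDFReal (μ : ℝ) (v : ℝ≥0) :
    Integrable fun t => |t - μ| * gaussianPDFReal μ v t := by
  rcases eq_or_ne v 0 with rfl | hv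
  · simp
  have hb : (0 : ℝ) < (2 * v : ℝ)⁻¹ := by positivity
  simp_rw [gaussianPDFReal_eq_const_mul_exp, mul_left_comm |_ - μ|]
  simpa only [norm_mul, Real.norm_eq_abs, abs_of_pos (exp_pos _)] using
    ((integrable_mul_exp_neg_mul_sq hb).norm.comp_sub_right μ).const_mul (√(2 * π * v))⁻¹

theorem integral_abs_sub_mul_gaussianPDFReal (μ : ℝ) {v : ℝ≥0} (hv : v ≠ 0) :
    ∫ t, |t - μ| * gaussianPDFReal μ v t = √(2 / π) * √v := by
  have hv' : (0 : ℝ) < v := by positivity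
  simp_rw [gaussianPDFReal_eq_const_mul_exp, mul_left_comm |_ - μ|]
  rw [integral_const_mul,
    integral_sub_right_eq_self (fun t => |t| * exp (-(2 * v : ℝ)⁻¹ * t ^ 2)) μ,
    integral_abs_mul_exp_neg_mul_sq (by positivity), inv_inv, inv_mul_eq_div,
    div_eq_iff (by positivity), ← sqrt_mul (by positivity), ← sqrt_mul (by positivity),
    show 2 / π * v * (2 * π * v) = (2 * v) ^ 2 by field_simp, sqrt_sq (by positivity)]

end ProbabilityTheory

section gaussDensity

variable {k : ℕ} (μ : EuclideanSpace ℝ (Fin k)) (v : ℝ≥0)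

theorem gaussDensity_eq_prod (z : EuclideanSpace ℝ (Fin k)) :
    gaussDensity k μ v z = ∏ i, gaussianPDFReal (μ i) v (z i) := by
  have h : (0 : ℝ) ≤ 2 * π * v := by positivity
  simp only [gaussDensity, gaussianPDFReal, Finset.prod_mul_distrib, ← Real.exp_sum,
    Finset.prod_const, Finset.card_univ, Fintype.card_fin]
  congr 1
  · rw [Real.sqrt_eq_rpow, ← rpow_neg h, ← rpow_natCast, ← rpow_mul h]
    ring_nf
  · rw [← Finset.sum_div, Finset.sum_neg_distrib, EuclideanSpace.real_norm_sq_eq]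
    rfl

theorem gaussDensity_nonneg (z : EuclideanSpace ℝ (Fin k)) : 0 ≤ gaussDensity k μ v z := by
  unfold gaussDensity; positivity

theorem integrable_gaussDensity : Integrable (gaussDensity k μ v) := by
  simp_rw [funext (gaussDensity_eq_prod μ v)]
  exact EuclideanSpace.integrable_prod_apply fun i => integrable_gaussianPDFReal (μ i) v

theorem integral_gaussDensity {v : ℝ≥0} (hv : v ≠ 0) : ∫ z, gaussDensity k μ v z = 1 := by
  simp_rw [gaussDensity_eq_prod, EuclideanSpace.integral_prod_apply,
    integral_gaussianPDFReal_eq_one _ hv, Finset.prod_const_one]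

theorem abs_sub_apply_mul_gaussDensity_eq_prod (i : Fin k) (z : EuclideanSpace ℝ (Fin k)) :
    |z i - μ i| * gaussDensity k μ v z =
      ∏ j, (if j = i then |z j - μ j| else 1) * gaussianPDFReal (μ j) v (z j) := by
  rw [Finset.prod_mul_distrib, Finset.prod_ite_eq', if_pos (Finset.mem_univ _),
    gaussDensity_eq_prod]

theorem integrable_abs_sub_apply_mul_gaussDensity (i : Fin k) :
    Integrable fun z : EuclideanSpace ℝ (Fin k) => |z i - μ i| * gaussDensity k μ v z := by
  simp_rw [abs_sub_apply_mul_gaussDensity_eq_prod]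
  refine EuclideanSpace.integrable_prod_apply
    (f := fun j t => (if j = i then |t - μ j| else 1) * gaussianPDFReal (μ j) v t) fun j => ?_
  split_ifs
  · exact integrable_abs_sub_mul_gaussianPDFReal (μ j) v
  · simpa using integrable_gaussianPDFReal (μ j) v

theorem integral_abs_sub_apply_mul_gaussDensity {v : ℝ≥0} (hv : v ≠ 0) (i : Fin k) :
    ∫ z, |z i - μ i| * gaussDensity k μ v z = √(2 / π) * √v := by
  simp_rw [abs_sub_apply_mul_gaussDensity_eq_prod]
  rw [EuclideanSpace.integral_prod_apply
    fun j t => (if j = i then |t - μ j| else 1) * gaussianPDFReal (μ j) v t]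
  rw [Finset.prod_eq_single i (fun j _ hj => by simp [hj, integral_gaussianPDFReal_eq_one _ hv])
    (by simp)]
  simpa using integral_abs_sub_mul_gaussianPDFReal (μ i) hv

theorem integrable_norm_sub_mul_gaussDensity :
    Integrable fun z : EuclideanSpace ℝ (Fin k) => ‖z - μ‖ * gaussDensity k μ v z := by
  refine (integrable_finsetSum Finset.univ fun i _ =>
    integrable_abs_sub_apply_mul_gaussDensity μ v i).mono'
    ((continuous_id.sub continuous_const).norm.aestronglyMeasurable.mul
      (integrable_gaussDensity μ v).aestronglyMeasurable) (ae_of_all _ fun z => ?_)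
  rw [Real.norm_eq_abs, abs_of_nonneg (mul_nonneg (norm_nonneg _) (gaussDensity_nonneg μ v z)),
    ← Finset.sum_mul]
  exact mul_le_mul_of_nonneg_right (EuclideanSpace.norm_le_sum_abs _) (gaussDensity_nonneg μ v z)

theorem integral_norm_sub_mul_gaussDensity_le {v : ℝ≥0} (hv : v ≠ 0) :
    ∫ z, ‖z - μ‖ * gaussDensity k μ v z ≤ k * (√(2 / π) * √v) :=
  calc ∫ z, ‖z - μ‖ * gaussDensity k μ v z
      ≤ ∫ z, ∑ i, |z i - μ i| * gaussDensity k μ v z := by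
        refine integral_mono (integrable_norm_sub_mul_gaussDensity μ v)
          (integrable_finsetSum _ fun i _ => integrable_abs_sub_apply_mul_gaussDensity μ v i)
          fun z => ?_
        rw [← Finset.sum_mul]
        exact mul_le_mul_of_nonneg_right (EuclideanSpace.norm_le_sum_abs _)
          (gaussDensity_nonneg μ v z)
    _ = ∑ i, ∫ z, |z i - μ i| * gaussDensity k μ v z :=
        integral_finsetSum _ fun i _ => integrable_abs_sub_apply_mul_gaussDensity μ v i
    _ = k * (√(2 / π) * √v) := by
        simp [integral_abs_sub_apply_mul_gaussDensity μ hv]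

end gaussDensity

/-- Pointwise learning amount of one DFLM bootstrapping iteration:
if `‖∇u‖ ≤ L` everywhere and `(T u)(x) = ∫ u(x−z)·f_{−VΔt,Δt}(z) dz − G·Δt`, then
`|(T u)(x) − u(x)| ≤ L·(C₁√Δt + C₂‖V‖Δt) + |G|Δt` with `C₁ = k√(2/π)`, `C₂ = k`. -/
theorem dflm_pointwise_learning_bound (k : ℕ) (hk : 1 ≤ k)
    (x V : EuclideanSpace ℝ (Fin k)) (G : ℝ) (Δt : ℝ) (hΔt : 0 < Δt)
    (L : ℝ) (hL : 0 ≤ L)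
    (u : EuclideanSpace ℝ (Fin k) → ℝ) (hu : Differentiable ℝ u)
    (hgrad : ∀ y : EuclideanSpace ℝ (Fin k), ‖fderiv ℝ u y‖ ≤ L) :
    |((∫ z : EuclideanSpace ℝ (Fin k), u (x - z) * gaussDensity k (-(Δt • V)) Δt z)
        - G * Δt) - u x| ≤
      L * ((k : ℝ) * Real.sqrt (2 / Real.pi) * Real.sqrt Δt + (k : ℝ) * ‖V‖ * Δt)
        + |G| * Δt := by
  lift L to ℝ≥0 using hL
  lift Δt to ℝ≥0 using hΔt.le
  have hv : Δt ≠ 0 := by exact_mod_cast hΔt.ne'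
  set μ : EuclideanSpace ℝ (Fin k) := -((Δt : ℝ) • V)
  have hlip : LipschitzWith L u :=
    lipschitzWith_of_nnnorm_fderiv_le hu fun y => by exact_mod_cast hgrad y
  have hdrift : ‖μ‖ ≤ k * ‖V‖ * Δt := calc
    ‖μ‖ = 1 * ‖V‖ * Δt := by simp [μ, norm_smul, mul_comm]
    _ ≤ k * ‖V‖ * Δt := by gcongr; exact_mod_cast hk
  have hmain := hlip.abs_integral_comp_sub_mul_sub_le (gaussDensity_nonneg μ Δt)
    (integrable_gaussDensity μ Δt) (integral_gaussDensity μ hv) μ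
    (integrable_norm_sub_mul_gaussDensity μ Δt) x
  calc |(∫ z, u (x - z) * gaussDensity k μ Δt z) - G * Δt - u x|
      ≤ |(∫ z, u (x - z) * gaussDensity k μ Δt z) - u x| + |G| * Δt := by
        rw [sub_right_comm]
        refine (abs_sub _ _).trans_eq ?_
        rw [abs_mul, abs_of_pos hΔt]
    _ ≤ L * (k * (√(2 / π) * √Δt) + k * ‖V‖ * Δt) + |G| * Δt := by
        gcongr
        refine hmain.trans ?_
        gcongr
        exact integral_norm_sub_mul_gaussDensity_le μ hv
    _ = L * (k * √(2 / π) * √Δt + k * ‖V‖ * Δt) + |G| * Δt := by ring
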